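/- arXiv:0908.0995 — 2 statements merged into one kernel-verified Lean document; each statement's English description precedes it below -/
import Mathlib

section
/- Let Γ be a δ-hyperbolic geodesic space, a an isometry, and p ∈ Γ with d(p, a(p)) ≤ d(a(p), a^{-1}(p)) − 100(δ+1). Then for each n > 0, the geodesic [p, a^n(p)] is contained in the 3δ-neighborhood of the union [p, a(p)] ∪ [a(p), a^2(p)] ∪ ⋯ ∪ [a^{n-1}(p), a^n(p)]. -/
open Filter Metric Set

/-- A geodesic segment from `x` to `y`: the image of an isometric parametrization
of the interval `[0, dist x y]`. -/
def IsGeodesicSegment {X : Type*} [MetricSpace X] (s : Set X) (x y : X) : Prop :=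
  ∃ γ : ℝ → X, γ 0 = x ∧ γ (dist x y) = y ∧
    (∀ u ∈ Set.Icc (0:ℝ) (dist x y), ∀ v ∈ Set.Icc (0:ℝ) (dist x y),
      dist (γ u) (γ v) = |u - v|) ∧ s = γ '' Set.Icc (0:ℝ) (dist x y)

/-- A geodesic metric space: any two points are joined by a geodesic segment. -/
def GeodesicSpace (X : Type*) [MetricSpace X] : Prop :=
  ∀ x y : X, ∃ s : Set X, IsGeodesicSegment s x y

/-- `δ`-hyperbolicity via thin triangles: each side of a geodesic triangle is contained
in the `δ`-neighborhood of the union of the other two sides. -/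
def DeltaHyperbolic (X : Type*) [MetricSpace X] (δ : ℝ) : Prop :=
  ∀ x y z : X, ∀ s t u : Set X, IsGeodesicSegment s x y → IsGeodesicSegment t y z →
    IsGeodesicSegment u x z → ∀ p ∈ u, ∃ q ∈ s ∪ t, dist p q ≤ δ

/-- A bi-infinite geodesic line, parametrized by arclength. -/
def IsGeodesicLine {X : Type*} [MetricSpace X] (α : ℝ → X) : Prop :=
  ∀ s t : ℝ, dist (α s) (α t) = |s - t|

/-- The `10δ`-overlap `α ∩_{10δ} β = (α ∩ N_{10δ}(β)) ∪ (β ∩ N_{10δ}(α))`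
of two geodesic lines. -/
def OverlapSet {X : Type*} [MetricSpace X] (δ : ℝ) (α β : ℝ → X) : Set X :=
  (Set.range α ∩ {x | ∃ t : ℝ, dist x (β t) ≤ 10 * δ}) ∪
  (Set.range β ∩ {x | ∃ t : ℝ, dist x (α t) ≤ 10 * δ})

/-- Translation length of an isometry: `tr a = lim dist x (aⁿ x) / n` (for every basepoint). -/
def HasTransLengthIso {X : Type*} [MetricSpace X] (a : X ≃ᵢ X) (τ : ℝ) : Prop :=
  ∀ x : X, Filter.Tendsto (fun n : ℕ => dist x ((a ^ n) x) / (n : ℝ))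
    Filter.atTop (nhds τ)

/-- An isometry is hyperbolic if some orbit moves at least linearly. -/
def IsHyperbolicIso {X : Type*} [MetricSpace X] (a : X ≃ᵢ X) : Prop :=
  ∃ (x : X) (C : ℝ), 0 < C ∧ ∀ n : ℕ, 0 < n → C * (n : ℝ) ≤ dist x ((a ^ n) x)

/-- A (geodesic) quasi-axis of an isometry `a`: a geodesic line `α` with `a(α) ⊆ N_C(α)`
for some `C ≥ 0`. -/
def IsQuasiAxisIso {X : Type*} [MetricSpace X] (a : X ≃ᵢ X) (α : ℝ → X) : Prop :=
  IsGeodesicLine α ∧ ∃ C : ℝ, 0 ≤ C ∧ ∀ t : ℝ, ∃ s : ℝ, dist (a (α t)) (α s) ≤ C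


/-!
Write `xₖ = aᵏ p`. The hypothesis says that the Gromov product `(xₖ · xₖ₊₂)_{xₖ₊₁}` is small
compared with the step `d(p, a p)`; by the four-point inequality this propagates along the orbit,
so that every step moves the orbit at least `94δ + 100` further away from `p`, and by invariance
also from `aⁿ p`. Now let `q ∈ [p, aⁿ p]` be `2δ`-far from the broken path. The triangle
`(p, xₖ, aⁿ p)` puts `q` within `δ` of `[p, xₖ]` or of `[xₖ, aⁿ p]`, and the second happens for
`k = 0` but not for `k = n`; at the last index `K` where it happens, `q` is `δ`-close to
`[p, x_{K+1}]` and to `[x_K, aⁿ p]`. Thinness of `(p, x_K, x_{K+1})` and `(x_K, x_{K+1}, aⁿ p)`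
then yields points of `[p, x_K]` and `[x_{K+1}, aⁿ p]` that are `4δ`-close, which forces
`d(p, x_{K+1}) + d(x_K, aⁿ p) ≤ d(p, x_K) + d(x_{K+1}, aⁿ p) + 8δ`, contradicting the progress.
-/

section

variable {X : Type*} [MetricSpace X]

noncomputable def gromovProduct (w x y : X) : ℝ := (dist w x + dist w y - dist x y) / 2

theorem gromovProduct_comm (w x y : X) : gromovProduct w x y = gromovProduct w y x := by
  unfold gromovProduct; rw [dist_comm x y]; ring

theorem gromovProduct_nonneg (w x y : X) : 0 ≤ gromovProduct w x y := by
  unfold gromovProduct; linarith [dist_triangle_left x y w]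

theorem gromovProduct_add_gromovProduct (w x y : X) :
    gromovProduct w x y + gromovProduct x w y = dist w x := by
  unfold gromovProduct; rw [dist_comm x w]; ring

theorem IsometryEquiv.dist_pow_apply_pow_apply (a : X ≃ᵢ X) (p : X) {i j : ℕ} (hij : i ≤ j) :
    dist ((a ^ i) p) ((a ^ j) p) = dist p ((a ^ (j - i)) p) := by
  obtain ⟨m, rfl⟩ := Nat.exists_eq_add_of_le hij
  rw [Nat.add_sub_cancel_left, pow_add, IsometryEquiv.mul_apply, IsometryEquiv.dist_eq]

theorem Nat.exists_lt_and_not_succ {P : ℕ → Prop} {n : ℕ} (h₀ : P 0) (hn : ¬P n) :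
    ∃ k < n, P k ∧ ¬P (k + 1) := by
  induction n with
  | zero => exact absurd h₀ hn
  | succ n ih =>
    by_cases hPn : P n
    · exact ⟨n, n.lt_succ_self, hPn, hn⟩
    · obtain ⟨k, hk, hPk⟩ := ih hPn
      exact ⟨k, hk.trans n.lt_succ_self, hPk⟩

namespace IsGeodesicSegment

variable {s : Set X} {x y : X}

theorem singleton (x : X) : IsGeodesicSegment {x} x x := by
  refine ⟨fun _ => x, rfl, rfl, fun u _ v _ => ?_, ?_⟩
  · simp only [dist_self, Set.mem_Icc] at *
    rw [show u = 0 by linarith, show v = 0 by linarith, sub_self, abs_zero]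
  · rw [dist_self, Set.Icc_self, Set.image_singleton]

theorem exists_dist_eq (hs : IsGeodesicSegment s x y) {t : ℝ} (ht : t ∈ Icc 0 (dist x y)) :
    ∃ m ∈ s, dist x m = t := by
  obtain ⟨γ, hγ₀, -, hγ, rfl⟩ := hs
  refine ⟨γ t, mem_image_of_mem γ ht, ?_⟩
  rw [← hγ₀, hγ 0 ⟨le_rfl, dist_nonneg⟩ t ht, zero_sub, abs_neg, abs_of_nonneg ht.1]

theorem dist_add_dist (hs : IsGeodesicSegment s x y) {m : X} (hm : m ∈ s) :
    dist x m + dist m y = dist x y := by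
  obtain ⟨γ, hγ₀, hγ₁, hγ, rfl⟩ := hs
  obtain ⟨t, ht, rfl⟩ := hm
  have h₀ := hγ 0 ⟨le_rfl, dist_nonneg⟩ t ht
  have h₁ := hγ t ht _ ⟨dist_nonneg, le_rfl⟩
  rw [hγ₀] at h₀
  rw [hγ₁] at h₁
  rw [h₀, h₁, zero_sub, abs_neg, abs_of_nonneg ht.1, abs_of_nonpos (by linarith [ht.2])]
  ring

theorem left_mem (hs : IsGeodesicSegment s x y) : x ∈ s := by
  obtain ⟨m, hm, hxm⟩ := hs.exists_dist_eq ⟨le_rfl, dist_nonneg⟩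
  rwa [← dist_eq_zero.mp hxm] at hm

theorem right_mem (hs : IsGeodesicSegment s x y) : y ∈ s := by
  obtain ⟨m, hm, hxm⟩ := hs.exists_dist_eq ⟨dist_nonneg, le_rfl⟩
  have := hs.dist_add_dist hm
  rwa [dist_eq_zero.mp (show dist m y = 0 by linarith)] at hm

theorem eq_of_mem_of_self (hs : IsGeodesicSegment s x x) {m : X} (hm : m ∈ s) : m = x := by
  have := hs.dist_add_dist hm
  rw [dist_self] at this
  exact dist_eq_zero.mp (by linarith [dist_nonneg (x := m) (y := x), dist_nonneg (x := x) (y := m)])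

theorem gromovProduct_le_dist (hs : IsGeodesicSegment s x y) {m : X} (hm : m ∈ s) (w : X) :
    gromovProduct w x y ≤ dist w m := by
  have := hs.dist_add_dist hm
  unfold gromovProduct
  linarith [dist_triangle w m x, dist_triangle w m y, dist_comm m x]

end IsGeodesicSegment

theorem dist_add_dist_le_of_mem_segments {s t : Set X} {x y z u w₁ w₂ : X}
    (hs : IsGeodesicSegment s x y) (hw₁ : w₁ ∈ s) (ht : IsGeodesicSegment t z u) (hw₂ : w₂ ∈ t) :
    dist x z + dist y u ≤ dist x y + dist z u + 2 * dist w₁ w₂ := by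
  have h₁ := hs.dist_add_dist hw₁
  have h₂ := ht.dist_add_dist hw₂
  linarith [dist_triangle4 x w₁ w₂ z, dist_triangle4 y w₁ w₂ u, dist_comm y w₁, dist_comm w₂ z]

namespace DeltaHyperbolic

variable {δ : ℝ}

theorem nonneg (hδ : DeltaHyperbolic X δ) (x : X) : 0 ≤ δ := by
  have hx := IsGeodesicSegment.singleton x
  obtain ⟨q, hq, hxq⟩ := hδ x x x {x} {x} {x} hx hx hx x rfl
  rw [union_self, mem_singleton_iff] at hq
  simpa [hq] using hxq

/-- The point of `[x, z]` at distance `(w · z)_x` from `x` does the job. -/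
theorem exists_mem_dist_le_gromovProduct (hδ : DeltaHyperbolic X δ) {u s t : Set X} {x z w : X}
    (hu : IsGeodesicSegment u x z) (hs : IsGeodesicSegment s x w) (ht : IsGeodesicSegment t w z) :
    ∃ m ∈ u, dist w m ≤ gromovProduct w x z + 2 * δ := by
  have hle : gromovProduct x w z ≤ dist x z := by
    unfold gromovProduct; linarith [dist_triangle x z w, dist_comm z w]
  obtain ⟨m, hm, hxm⟩ := hu.exists_dist_eq ⟨gromovProduct_nonneg x w z, hle⟩
  refine ⟨m, hm, ?_⟩
  have hmz := hu.dist_add_dist hm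
  obtain ⟨m', hm' | hm', hmm'⟩ := hδ x w z s t u hs ht hu m hm
  · have := hs.dist_add_dist hm'
    unfold gromovProduct at hxm ⊢
    linarith [dist_triangle w m' m, dist_triangle x m' m, dist_comm m m', dist_comm x w,
      dist_comm m' w]
  · have := ht.dist_add_dist hm'
    unfold gromovProduct at hxm ⊢
    linarith [dist_triangle w m' m, dist_triangle m m' z, dist_comm m m', dist_comm x w]

theorem min_gromovProduct_le (hgeo : GeodesicSpace X) (hδ : DeltaHyperbolic X δ)
    (w x y z : X) :
    min (gromovProduct w x y) (gromovProduct w y z) ≤ gromovProduct w x z + 3 * δ := by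
  obtain ⟨u, hu⟩ := hgeo x z
  obtain ⟨sxy, hsxy⟩ := hgeo x y
  obtain ⟨syz, hsyz⟩ := hgeo y z
  obtain ⟨sxw, hsxw⟩ := hgeo x w
  obtain ⟨swz, hswz⟩ := hgeo w z
  obtain ⟨m, hm, hwm⟩ := hδ.exists_mem_dist_le_gromovProduct hu hsxw hswz
  obtain ⟨m', hm' | hm', hmm'⟩ := hδ x y z sxy syz u hsxy hsyz hu m hm
  · linarith [min_le_left (gromovProduct w x y) (gromovProduct w y z),
      hsxy.gromovProduct_le_dist hm' w, dist_triangle w m m']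
  · linarith [min_le_right (gromovProduct w x y) (gromovProduct w y z),
      hsyz.gromovProduct_le_dist hm' w, dist_triangle w m m']

theorem gromovProduct_zero_succ_le (hgeo : GeodesicSpace X) (hδ : DeltaHyperbolic X δ)
    {x : ℕ → X} {C : ℝ} (hturn : ∀ k, gromovProduct (x (k + 1)) (x k) (x (k + 2)) ≤ C)
    (hstep : ∀ k, 2 * C + 6 * δ < dist (x k) (x (k + 1))) (k : ℕ) :
    gromovProduct (x k) (x 0) (x (k + 1)) ≤ C + 3 * δ := by
  induction k with
  | zero =>
    have hC := (gromovProduct_nonneg _ _ _).trans (hturn 0)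
    have hgro : gromovProduct (x 0) (x 0) (x 1) = 0 := by
      simp only [gromovProduct, dist_self]; ring
    linarith [hδ.nonneg (x 0)]
  | succ k ih =>
    have hback := gromovProduct_add_gromovProduct (x (k + 1)) (x k) (x 0)
    rw [gromovProduct_comm (x k), dist_comm] at hback
    have := hstep k
    have := hturn k
    rcases min_le_iff.mp (hδ.min_gromovProduct_le hgeo (x (k + 1)) (x k) (x 0) (x (k + 2)))
      with h | h <;> linarith

theorem dist_pow_apply_add_le (hgeo : GeodesicSpace X) (hδ : DeltaHyperbolic X δ)
    (a : X ≃ᵢ X) (p : X) (h : dist p (a p) ≤ dist (a p) (a⁻¹ p) - 100 * (δ + 1)) (k : ℕ) :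
    dist p ((a ^ k) p) + 94 * δ + 100 ≤ dist p ((a ^ (k + 1)) p) := by
  have hstep (k : ℕ) : dist ((a ^ k) p) ((a ^ (k + 1)) p) = dist p (a p) := by
    rw [a.dist_pow_apply_pow_apply p (Nat.le_add_right k 1), Nat.add_sub_cancel_left, pow_one]
  have hturn (k : ℕ) : gromovProduct ((a ^ (k + 1)) p) ((a ^ k) p) ((a ^ (k + 2)) p)
      ≤ (dist p (a p) - 100 * (δ + 1)) / 2 := by
    have hskip : dist ((a ^ k) p) ((a ^ (k + 2)) p) = dist (a⁻¹ p) (a p) := by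
      rw [a.dist_pow_apply_pow_apply p (by omega), Nat.add_sub_cancel_left, pow_two,
        IsometryEquiv.mul_apply, ← a.dist_eq (a⁻¹ p), IsometryEquiv.apply_inv_self]
    unfold gromovProduct
    rw [dist_comm, hstep, hstep, hskip, dist_comm (a⁻¹ p)]
    linarith
  have hgro := hδ.gromovProduct_zero_succ_le hgeo (x := fun k => (a ^ k) p) hturn
    (fun k => by rw [hstep]; linarith [hδ.nonneg p]) k
  simp only [gromovProduct, pow_zero, IsometryEquiv.coe_one, id, hstep, dist_comm _ p] at hgro
  linarith

theorem exists_mem_dist_le_of_progress (hgeo : GeodesicSpace X) (hδ : DeltaHyperbolic X δ)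
    {x : ℕ → X} {n : ℕ} (hn : 0 < n)
    (hprog : ∀ k < n, dist (x 0) (x k) + dist (x (k + 1)) (x n) + 8 * δ
      < dist (x 0) (x (k + 1)) + dist (x k) (x n))
    {s : Set X} (hs : IsGeodesicSegment s (x 0) (x n)) {seg : ℕ → Set X}
    (hseg : ∀ k < n, IsGeodesicSegment (seg k) (x k) (x (k + 1))) {q : X} (hq : q ∈ s) :
    ∃ k < n, ∃ r ∈ seg k, dist q r ≤ 2 * δ := by
  by_contra! hfar
  have hδ0 := hδ.nonneg q
  have hfar' : ∀ k < n, ∀ y, dist q y ≤ δ → ∀ r ∈ seg k, δ < dist y r := fun k hk y hy r hr => by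
    linarith [hfar k hk r hr, dist_triangle q y r]
  choose D hD using fun k => hgeo (x 0) (x k)
  choose G hG using fun k => hgeo (x k) (x n)
  obtain ⟨K, hK, ⟨y₁, hy₁, hqy₁⟩, hnot⟩ :
      ∃ K < n, (∃ y ∈ G K, dist q y ≤ δ) ∧ ¬∃ y ∈ G (K + 1), dist q y ≤ δ := by
    refine Nat.exists_lt_and_not_succ ?_ ?_
    · obtain ⟨y, hy | hy, hqy⟩ := hδ _ _ _ _ _ _ (hD 0) (hG 0) hs q hq
      · rw [(hD 0).eq_of_mem_of_self hy] at hqy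
        linarith [hfar' 0 hn _ hqy _ (hseg 0 hn).left_mem, dist_self (x 0)]
      · exact ⟨y, hy, hqy⟩
    · rintro ⟨y, hy, hqy⟩
      rw [(hG n).eq_of_mem_of_self hy] at hqy
      have hlast := (hseg (n - 1) (by omega)).right_mem
      rw [Nat.sub_add_cancel hn] at hlast
      linarith [hfar' (n - 1) (by omega) _ hqy _ hlast, dist_self (x n)]
  obtain ⟨y₂, hy₂ | hy₂, hqy₂⟩ := hδ _ _ _ _ _ _ (hD (K + 1)) (hG (K + 1)) hs q hq
  swap
  · exact hnot ⟨y₂, hy₂, hqy₂⟩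
  obtain ⟨w₁, hw₁ | hw₁, hyw₁⟩ := hδ _ _ _ _ _ _ (hD K) (hseg K hK) (hD (K + 1)) y₂ hy₂
  swap
  · linarith [hfar' K hK y₂ hqy₂ w₁ hw₁]
  obtain ⟨w₂, hw₂ | hw₂, hyw₂⟩ := hδ _ _ _ _ _ _ (hseg K hK) (hG (K + 1)) (hG K) y₁ hy₁
  · linarith [hfar' K hK y₁ hqy₁ w₂ hw₂]
  have := dist_add_dist_le_of_mem_segments (hD K) hw₁ (hG (K + 1)) hw₂
  linarith [hprog K hK, dist_triangle4 w₁ y₂ q y₁, dist_triangle w₁ y₁ w₂, dist_comm w₁ y₂,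
    dist_comm y₂ q]

end DeltaHyperbolic

end

/-- If `d(p, a p) ≤ d(a p, a⁻¹ p) − 100(δ+1)`, then for every `n > 0` any
geodesic `[p, aⁿ p]` is contained in the `3δ`-neighborhood of the broken path
`[p, a p] ∪ [a p, a² p] ∪ ⋯ ∪ [aⁿ⁻¹ p, aⁿ p]` (for any choice of the geodesic segments). -/
theorem geodesic_near_broken_path
    {X : Type*} [MetricSpace X] {δ : ℝ}
    (hgeo : GeodesicSpace X) (hδ : DeltaHyperbolic X δ)
    (a : X ≃ᵢ X) (p : X)
    (h : dist p (a p) ≤ dist (a p) (a⁻¹ p) - 100 * (δ + 1)) :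
    ∀ n : ℕ, 0 < n → ∀ s : Set X, IsGeodesicSegment s p ((a ^ n) p) →
      ∀ seg : ℕ → Set X,
        (∀ k : ℕ, k < n → IsGeodesicSegment (seg k) ((a ^ k) p) ((a ^ (k+1)) p)) →
        ∀ q ∈ s, ∃ k : ℕ, k < n ∧ ∃ r ∈ seg k, dist q r ≤ 3 * δ := by
  intro n hn s hs seg hseg q hq
  have hδ0 := hδ.nonneg p
  have hprog : ∀ k < n, dist p ((a ^ k) p) + dist ((a ^ (k + 1)) p) ((a ^ n) p) + 8 * δ
      < dist p ((a ^ (k + 1)) p) + dist ((a ^ k) p) ((a ^ n) p) := by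
    intro k hk
    rw [a.dist_pow_apply_pow_apply p hk, a.dist_pow_apply_pow_apply p hk.le,
      show n - k = n - (k + 1) + 1 by omega]
    linarith [hδ.dist_pow_apply_add_le hgeo a p h k,
      hδ.dist_pow_apply_add_le hgeo a p h (n - (k + 1))]
  obtain ⟨k, hk, r, hr, hqr⟩ := hδ.exists_mem_dist_le_of_progress hgeo (x := fun k => (a ^ k) p)
    hn (by simpa using hprog) (by simpa using hs) hseg hq
  exact ⟨k, hk, r, hr, by linarith⟩
end

section
/- Let G act properly discontinuously by isometries on a δ-hyperbolic graph Γ (with finitely many elements moving any point a bounded amount), and let a, b ∈ G be hyperbolic isometries sharing a common geodesic quasi-axis α. Then there exist integers k, l > 0 with [a, b^k] = 1 and [b, a^l] = 1. -/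
open Filter Metric Set

/-- The group `G` acts on `X` by isometries. -/
def IsometricAction (G X : Type*) [Group G] [MetricSpace X] [MulAction G X] : Prop :=
  ∀ g : G, Isometry (fun x : X => g • x)

/-- Translation length of a group element acting on `X`. -/
def HasTransLength {G : Type*} [Group G] (X : Type*) [MetricSpace X] [MulAction G X]
    (a : G) (τ : ℝ) : Prop :=
  ∀ x : X, Filter.Tendsto (fun n : ℕ => dist x ((a ^ n) • x) / (n : ℝ))
    Filter.atTop (nhds τ)

/-- A (geodesic) quasi-axis of `a`: a geodesic line `α` with `a • α ⊆ N_C(α)` for some `C ≥ 0`. -/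
def IsQuasiAxis {G : Type*} [Group G] {X : Type*} [MetricSpace X] [MulAction G X]
    (a : G) (α : ℝ → X) : Prop :=
  IsGeodesicLine α ∧ ∃ C : ℝ, 0 ≤ C ∧ ∀ t : ℝ, ∃ s : ℝ, dist (a • α t) (α s) ≤ C

/-- Acylindricity at scale `R` with constants `K`, `L`. -/
def AcylAt (G X : Type*) [Group G] [MetricSpace X] [MulAction G X] (R K L : ℝ) : Prop :=
  1 ≤ K ∧ 1 ≤ L ∧ ∀ x y : X, L ≤ dist x y →
    {g : G | dist x (g • x) ≤ R ∧ dist y (g • y) ≤ R}.Finite ∧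
    ({g : G | dist x (g • x) ≤ R ∧ dist y (g • y) ≤ R}.ncard : ℝ) ≤ K

/-- An acylindrical action, with constant functions `K L : ℝ → ℝ`. -/
def Acylindrical (G X : Type*) [Group G] [MetricSpace X] [MulAction G X]
    (K L : ℝ → ℝ) : Prop :=
  ∀ R : ℝ, 0 < R → AcylAt G X R (K R) (L R)

/-- The homomorphism from the rank-2 free group sending the generators to `a` and `b`. -/
def pairMap {G : Type*} [Group G] (a b : G) : FreeGroup Bool →* G :=
  FreeGroup.lift (fun t => if t then a else b)

/-- `a`, `b` generate a free subgroup of rank two. -/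
def FreePair {G : Type*} [Group G] (a b : G) : Prop :=
  Function.Injective (pairMap a b)

/-- The orbit map of `⟨a, b⟩` into `X` is a quasi-isometric embedding
(word metric with respect to `{a, b}`). -/
def OrbitQIE (G X : Type*) [Group G] [MetricSpace X] [MulAction G X] (a b : G) : Prop :=
  ∃ (x : X) (Λ C : ℝ), 0 < Λ ∧ 0 ≤ C ∧ ∀ w : FreeGroup Bool,
    ((FreeGroup.toWord w).length : ℝ) / Λ - C ≤ dist x (pairMap a b w • x) ∧
    dist x (pairMap a b w • x) ≤ Λ * ((FreeGroup.toWord w).length : ℝ) + C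

/-- Two group elements are independent: no nonzero powers commute. -/
def Independent {G : Type*} [Group G] (a b : G) : Prop :=
  ∀ s t : ℤ, s ≠ 0 → t ≠ 0 → a ^ s * b ^ t ≠ b ^ t * a ^ s

/-!
An isometry moving the geodesic line `α` into a bounded neighbourhood of itself moves it into
its `2δ`-neighbourhood (thin quadrilaterals), and so acts on `α` as a `4δ`-rough isometry of `ℝ`,
i.e. coarsely as a translation or as a reflection. A reflection keeps the orbits bounded, which
positive translation length forbids; hence `a` moves every point of `α` by at most some `M`.
The points `bⁿ • x`, `x ∈ α`, stay `2δ`-close to `α`, so all conjugates `b⁻ⁿ a bⁿ` move `x` by at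
most `M + 4δ`. By properness two of them coincide, and `a` commutes with a positive power of `b`.
-/

def IsRoughIsometry (K : ℝ) (φ : ℝ → ℝ) : Prop :=
  ∀ t u, |(|φ t - φ u| - |t - u|)| ≤ K

namespace IsRoughIsometry

variable {K : ℝ} {φ : ℝ → ℝ}

lemma nonneg (hφ : IsRoughIsometry K φ) : 0 ≤ K := by
  simpa using hφ 0 0

lemma neg (hφ : IsRoughIsometry K φ) : IsRoughIsometry K (fun t => -φ t) := by
  intro t u
  show |(|-φ t - -φ u| - |t - u|)| ≤ K
  rw [neg_sub_neg, abs_sub_comm (φ u)]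
  exact hφ t u

/-- If the two increments had opposite signs, `|φ t - φ v|` would be too short. -/
lemma mul_pos_of_consecutive (hφ : IsRoughIsometry K φ) {v u t : ℝ}
    (h₁ : 2 * K < u - v) (h₂ : 2 * K < t - u) : 0 < (φ u - φ v) * (φ t - φ u) := by
  have hK := hφ.nonneg
  obtain ⟨l₁, r₁⟩ := abs_le.mp (hφ u v)
  obtain ⟨l₂, r₂⟩ := abs_le.mp (hφ t u)
  obtain ⟨l₃, r₃⟩ := abs_le.mp (hφ t v)
  rw [abs_of_pos (by linarith : (0 : ℝ) < u - v)] at l₁ r₁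
  rw [abs_of_pos (by linarith : (0 : ℝ) < t - u)] at l₂ r₂
  rw [abs_of_pos (by linarith : (0 : ℝ) < t - v)] at l₃ r₃
  rcases abs_cases (φ u - φ v) with ⟨e₁, -⟩ | ⟨e₁, -⟩ <;>
    rcases abs_cases (φ t - φ u) with ⟨e₂, -⟩ | ⟨e₂, -⟩ <;>
      rcases abs_cases (φ t - φ v) with ⟨e₃, -⟩ | ⟨e₃, -⟩ <;>
        rw [e₁] at l₁ r₁ <;> rw [e₂] at l₂ r₂ <;> rw [e₃] at l₃ r₃ <;>
          first
            | exact mul_pos (by linarith) (by linarith)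
            | exact mul_pos_of_neg_of_neg (by linarith) (by linarith)

lemma mul_pos_of_long (hφ : IsRoughIsometry K φ) {u t u' t' : ℝ}
    (h : 2 * K < t - u) (h' : 2 * K < t' - u') : 0 < (φ t - φ u) * (φ t' - φ u') := by
  -- compare both increments with the one over `[w', w]`, placed below `u` and `u'`
  set w := min u u' - (2 * K + 1)
  set w' := w - (2 * K + 1)
  have hu : 2 * K < u - w := by linarith [min_le_left u u']
  have hu' : 2 * K < u' - w := by linarith [min_le_right u u']
  have hw : 2 * K < w - w' := by linarith
  have h₁ := hφ.mul_pos_of_consecutive hw hu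
  have h₂ := hφ.mul_pos_of_consecutive hu h
  have h₃ := hφ.mul_pos_of_consecutive hw hu'
  have h₄ := hφ.mul_pos_of_consecutive hu' h'
  have h₅ : 0 < (φ w - φ w') * (φ t - φ u) := by nlinarith [mul_pos h₁ h₂, sq_nonneg (φ u - φ w)]
  have h₆ : 0 < (φ w - φ w') * (φ t' - φ u') := by
    nlinarith [mul_pos h₃ h₄, sq_nonneg (φ u' - φ w)]
  nlinarith [mul_pos h₅ h₆, sq_nonneg (φ w - φ w')]

lemma translation_of_pos (hφ : IsRoughIsometry K φ) (hpos : 0 < φ (2 * K + 1) - φ 0) (t : ℝ) :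
    |φ t - (φ 0 + t)| ≤ 5 * K := by
  have hK := hφ.nonneg
  have hc : 2 * K < 2 * K + 1 - 0 := by linarith
  rcases lt_or_ge (2 * K) t with ht | ht
  · have hinc : 0 < φ t - φ 0 := pos_of_mul_pos_left (hφ.mul_pos_of_long (by linarith) hc) hpos.le
    have h := hφ t 0
    rw [abs_of_pos hinc, sub_zero, abs_of_pos (by linarith : 0 < t)] at h
    obtain ⟨l, r⟩ := abs_le.mp h
    exact abs_le.mpr ⟨by linarith, by linarith⟩
  rcases lt_or_ge t (-(2 * K)) with ht' | ht'
  · have hinc : 0 < φ 0 - φ t := pos_of_mul_pos_left (hφ.mul_pos_of_long (by linarith) hc) hpos.le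
    have h := hφ 0 t
    rw [abs_of_pos hinc, zero_sub, abs_of_pos (by linarith : 0 < -t)] at h
    obtain ⟨l, r⟩ := abs_le.mp h
    exact abs_le.mpr ⟨by linarith, by linarith⟩
  · have h := hφ t 0
    rw [sub_zero] at h
    have hφt : |φ t - φ 0| ≤ |t| + K := by linarith [(abs_le.mp h).2]
    have ht'' : |t| ≤ 2 * K := abs_le.mpr ⟨ht', ht⟩
    calc |φ t - (φ 0 + t)| ≤ |φ t - φ 0| + |t| := by
          rw [show φ t - (φ 0 + t) = (φ t - φ 0) - t by ring]; exact abs_sub _ _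
      _ ≤ 5 * K := by linarith

lemma translation_or_reflection (hφ : IsRoughIsometry K φ) :
    (∀ t, |φ t - (φ 0 + t)| ≤ 5 * K) ∨ (∀ t, |φ t - (φ 0 - t)| ≤ 5 * K) := by
  have hK := hφ.nonneg
  have hlong : K < |φ (2 * K + 1) - φ 0| := by
    have h := (abs_le.mp (hφ (2 * K + 1) 0)).1
    rw [sub_zero, abs_of_pos (by linarith : (0 : ℝ) < 2 * K + 1)] at h
    linarith
  rcases lt_or_gt_of_ne (abs_pos.mp (hK.trans_lt hlong)) with hneg | hpos
  · refine .inr fun t => ?_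
    have h := hφ.neg.translation_of_pos (by linarith) t
    rwa [show -φ t - (-φ 0 + t) = -(φ t - (φ 0 - t)) by ring, abs_neg] at h
  · exact .inl (hφ.translation_of_pos hpos)

end IsRoughIsometry

lemma IsometricAction.dist_smul_smul {G X : Type*} [Group G] [MetricSpace X] [MulAction G X]
    (hiso : IsometricAction G X) (g : G) (x y : X) : dist (g • x) (g • y) = dist x y :=
  (hiso g).dist_eq x y

section Geodesics

variable {X : Type*} [MetricSpace X]

lemma DeltaHyperbolic.nonneg_s10 {δ : ℝ} (hδ : DeltaHyperbolic X δ) (x : X) : 0 ≤ δ := by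
  have hx : IsGeodesicSegment {x} x x := ⟨fun _ => x, rfl, rfl, by simp, by simp⟩
  obtain ⟨q, hq, hxq⟩ := hδ x x x _ _ _ hx hx hx x rfl
  rw [union_self, mem_singleton_iff] at hq
  simpa [hq] using hxq

namespace IsGeodesicSegment

variable {s : Set X} {x y p : X}

lemma symm (hs : IsGeodesicSegment s x y) : IsGeodesicSegment s y x := by
  obtain ⟨γ, hγ₀, hγ₁, hγ, rfl⟩ := hs
  refine ⟨fun u => γ (dist x y - u), ?_, ?_, ?_, ?_⟩ <;> simp only [dist_comm y x]
  · simpa using hγ₁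
  · simpa using hγ₀
  · intro u hu v hv
    rw [hγ _ ⟨by linarith [hu.2], by linarith [hu.1]⟩ _ ⟨by linarith [hv.2], by linarith [hv.1]⟩,
      sub_sub_sub_cancel_left, abs_sub_comm]
  · rw [← image_image γ (fun u => dist x y - u), image_const_sub_Icc, sub_self, sub_zero]

lemma dist_left_le (hs : IsGeodesicSegment s x y) (hp : p ∈ s) : dist p x ≤ dist x y := by
  obtain ⟨γ, hγ₀, -, hγ, rfl⟩ := hs
  obtain ⟨u, hu, rfl⟩ := hp
  calc dist (γ u) x = u := by
        rw [← hγ₀, hγ u hu 0 ⟨le_rfl, dist_nonneg⟩, sub_zero, abs_of_nonneg hu.1]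
    _ ≤ dist x y := hu.2

lemma dist_right_le (hs : IsGeodesicSegment s x y) (hp : p ∈ s) : dist p y ≤ dist x y :=
  dist_comm x y ▸ hs.symm.dist_left_le hp

end IsGeodesicSegment

lemma IsGeodesicLine.isGeodesicSegment_image {α : ℝ → X} (hα : IsGeodesicLine α) (s₁ s₂ : ℝ) :
    IsGeodesicSegment (α '' uIcc s₁ s₂) (α s₁) (α s₂) := by
  wlog h : s₁ ≤ s₂ generalizing s₁ s₂
  · exact uIcc_comm s₂ s₁ ▸ (this s₂ s₁ (le_of_not_ge h)).symm
  have hd : dist (α s₁) (α s₂) = s₂ - s₁ := by rw [hα, abs_sub_comm, abs_of_nonneg (by linarith)]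
  refine ⟨fun u => α (s₁ + u), by simp, by simp [hd], fun u _ v _ => ?_, ?_⟩
  · rw [hα, add_sub_add_left_eq_sub]
  · rw [hd, ← image_image α (fun u => s₁ + u), image_const_add_Icc, add_zero, add_sub_cancel,
      uIcc_of_le h]

end Geodesics

namespace DeltaHyperbolic

variable {X : Type*} [MetricSpace X] {δ : ℝ} {α : ℝ → X}

/-- The quadrilateral `x, y, α s₂, α s₁` is cut along the diagonal `[α s₁, y]` into two thin
triangles. -/
lemma near_endpoint_or_line (hgeo : GeodesicSpace X) (hδ : DeltaHyperbolic X δ)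
    (hα : IsGeodesicLine α) {x y p : X} {s₁ s₂ C : ℝ} {seg : Set X}
    (hseg : IsGeodesicSegment seg x y) (hp : p ∈ seg)
    (hx : dist x (α s₁) ≤ C) (hy : dist y (α s₂) ≤ C) :
    dist p x ≤ C + δ ∨ dist p y ≤ C + 2 * δ ∨ ∃ s, dist p (α s) ≤ 2 * δ := by
  obtain ⟨side₁, hside₁⟩ := hgeo x (α s₁)
  obtain ⟨diag, hdiag⟩ := hgeo (α s₁) y
  obtain ⟨q, hq, hpq⟩ := hδ x (α s₁) y side₁ diag seg hside₁ hdiag hseg p hp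
  rcases hq with hq | hq
  · left
    linarith [dist_triangle p q x, hside₁.dist_left_le hq]
  obtain ⟨side₂, hside₂⟩ := hgeo (α s₂) y
  obtain ⟨r, hr, hqr⟩ :=
    hδ (α s₁) (α s₂) y _ side₂ diag (hα.isGeodesicSegment_image s₁ s₂) hside₂ hdiag q hq
  rcases hr with ⟨s, -, rfl⟩ | hr
  · exact .inr (.inr ⟨s, by linarith [dist_triangle p q (α s)]⟩)
  · refine .inr (.inl ?_)
    linarith [dist_triangle4 p q r y, hside₂.dist_right_le hr, dist_comm y (α s₂)]

/-- Points of `f ∘ α` far from the ends of a long segment of it are `2δ`-close to `α`. -/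
lemma near_line_of_near_line (hgeo : GeodesicSpace X) (hδ : DeltaHyperbolic X δ)
    (hα : IsGeodesicLine α) {f : X → X} (hf : Isometry f) {C : ℝ}
    (hC : ∀ t, ∃ s, dist (f (α t)) (α s) ≤ C) (t : ℝ) : ∃ s, dist (f (α t)) (α s) ≤ 2 * δ := by
  have hδ₀ := hδ.nonneg_s10 (α 0)
  have hβ : IsGeodesicLine (fun u => f (α u)) := fun u v => by rw [hf.dist_eq, hα]
  set T := |t| + |C| + 2 * δ + 1
  obtain ⟨s₁, hs₁⟩ := hC (-T)
  obtain ⟨s₂, hs₂⟩ := hC T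
  have hmem : f (α t) ∈ (fun u => f (α u)) '' uIcc (-T) T := by
    refine ⟨t, mem_uIcc.mpr (.inl ⟨?_, ?_⟩), rfl⟩ <;>
      linarith [neg_abs_le t, le_abs_self t, abs_nonneg C]
  rcases near_endpoint_or_line hgeo hδ hα (hβ.isGeodesicSegment_image (-T) T) hmem hs₁ hs₂
    with h | h | h
  · have := hβ t (-T)
    linarith [le_abs_self (t - -T), le_abs_self C, neg_abs_le t]
  · have := hβ t T
    linarith [neg_abs_le (t - T), le_abs_self C, le_abs_self t]
  · exact h

lemma near_line_pow {G : Type*} [Group G] [MulAction G X] (hiso : IsometricAction G X)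
    (hgeo : GeodesicSpace X) (hδ : DeltaHyperbolic X δ) (hα : IsGeodesicLine α) {g : G} {C : ℝ}
    (hC : ∀ t, ∃ s, dist (g • α t) (α s) ≤ C) (n : ℕ) (t : ℝ) :
    ∃ s, dist (g ^ n • α t) (α s) ≤ 2 * δ := by
  induction n generalizing t with
  | zero => exact ⟨t, by simpa using hδ.nonneg_s10 (α 0)⟩
  | succ n ih =>
    refine hδ.near_line_of_near_line hgeo hα (hiso (g ^ (n + 1))) (C := 2 * δ + C) (fun t => ?_) t
    obtain ⟨s, hs⟩ := ih t
    obtain ⟨s', hs'⟩ := hC s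
    refine ⟨s', ?_⟩
    calc dist (g ^ (n + 1) • α t) (α s')
        ≤ dist (g ^ (n + 1) • α t) (g • α s) + dist (g • α s) (α s') := dist_triangle _ _ _
      _ = dist (g ^ n • α t) (α s) + dist (g • α s) (α s') := by
          rw [pow_succ', mul_smul, hiso.dist_smul_smul]
      _ ≤ 2 * δ + C := add_le_add hs hs'

end DeltaHyperbolic

lemma IsGeodesicLine.isRoughIsometry_of_near {X : Type*} [MetricSpace X] {α : ℝ → X}
    (hα : IsGeodesicLine α) {f : X → X} (hf : Isometry f) {φ : ℝ → ℝ} {C : ℝ}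
    (hφ : ∀ t, dist (f (α t)) (α (φ t)) ≤ C) : IsRoughIsometry (2 * C) φ := by
  intro t u
  have h := dist_dist_dist_le (f (α t)) (f (α u)) (α (φ t)) (α (φ u))
  rw [hf.dist_eq, hα, hα, Real.dist_eq, abs_sub_comm] at h
  linarith [hφ t, hφ u]

section Dynamics

variable {G X : Type*} [Group G] [MetricSpace X] [MulAction G X]

lemma HasTransLength.eq_zero_of_bounded {g : G} {τ B : ℝ} (hτ : HasTransLength X g τ) (x : X)
    (hB : ∀ n : ℕ, dist x (g ^ n • x) ≤ B) : τ = 0 :=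
  tendsto_nhds_unique (hτ x) <| squeeze_zero (fun n => div_nonneg dist_nonneg n.cast_nonneg)
    (fun n => div_le_div_of_nonneg_right (hB n) n.cast_nonneg)
    (tendsto_const_div_atTop_nhds_zero_nat B)

/-- `d n + d (n + 1)` stays near `c` because `g` reverses `α`, while `d (n + 1) - d n` is
bounded because `g` moves `x` a bounded amount: so `d` is bounded. -/
lemma IsometricAction.bounded_orbit_of_reflection (hiso : IsometricAction G X) {α : ℝ → X}
    (hα : IsGeodesicLine α) {g : G} {x : X} {ψ : ℝ → ℝ} {d : ℕ → ℝ} {c C K : ℝ}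
    (hψ : ∀ t, dist (g • α t) (α (ψ t)) ≤ C) (hrefl : ∀ t, |ψ t - (c - t)| ≤ K)
    (hd : ∀ n : ℕ, dist (g ^ n • x) (α (d n)) ≤ C) : ∃ B, ∀ n : ℕ, dist x (g ^ n • x) ≤ B := by
  set D := dist (g • x) x
  have hstep (n : ℕ) : |d (n + 1) - ψ (d n)| ≤ 3 * C := by
    rw [← hα]
    calc dist (α (d (n + 1))) (α (ψ (d n)))
        ≤ dist (α (d (n + 1))) (g ^ (n + 1) • x) + dist (g ^ (n + 1) • x) (g • α (d n))
          + dist (g • α (d n)) (α (ψ (d n))) := dist_triangle4 _ _ _ _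
      _ ≤ C + C + C := by
          gcongr
          · rw [dist_comm]; exact hd _
          · rw [pow_succ', mul_smul, hiso.dist_smul_smul]; exact hd n
          · exact hψ _
      _ = 3 * C := by ring
  have hshift (n : ℕ) : |d (n + 1) - d n| ≤ D + 2 * C := by
    rw [← hα]
    calc dist (α (d (n + 1))) (α (d n))
        ≤ dist (α (d (n + 1))) (g ^ (n + 1) • x) + dist (g ^ (n + 1) • x) (g ^ n • x)
          + dist (g ^ n • x) (α (d n)) := dist_triangle4 _ _ _ _
      _ ≤ C + D + C := by
          gcongr
          · rw [dist_comm]; exact hd _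
          · rw [pow_succ, mul_smul, hiso.dist_smul_smul]
          · exact hd n
      _ = D + 2 * C := by ring
  have hbound (n : ℕ) : |d n| ≤ (|c| + D + 5 * C + K) / 2 := by
    obtain ⟨l₁, r₁⟩ := abs_le.mp (hstep n)
    obtain ⟨l₂, r₂⟩ := abs_le.mp (hshift n)
    obtain ⟨l₃, r₃⟩ := abs_le.mp (hrefl (d n))
    exact abs_le.mpr ⟨by linarith [neg_abs_le c], by linarith [le_abs_self c]⟩
  refine ⟨2 * C + (|c| + D + 5 * C + K), fun n => ?_⟩
  calc dist x (g ^ n • x)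
      ≤ dist x (α (d 0)) + dist (α (d 0)) (α (d n)) + dist (α (d n)) (g ^ n • x) :=
        dist_triangle4 _ _ _ _
    _ ≤ C + (|d 0| + |d n|) + C := by
        gcongr
        · simpa using hd 0
        · rw [hα]; exact abs_sub _ _
        · rw [dist_comm]; exact hd n
    _ ≤ 2 * C + (|c| + D + 5 * C + K) := by linarith [hbound 0, hbound n]

lemma DeltaHyperbolic.exists_dist_smul_le_of_isQuasiAxis (hiso : IsometricAction G X)
    (hgeo : GeodesicSpace X) {δ : ℝ} (hδ : DeltaHyperbolic X δ) {a : G} {τ : ℝ}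
    (hτ : HasTransLength X a τ) (hτ₀ : 0 < τ) {α : ℝ → X} (hα : IsQuasiAxis a α) :
    ∃ M, ∀ t, dist (α t) (a • α t) ≤ M := by
  obtain ⟨hline, C, -, hC⟩ := hα
  choose φ hφ using hδ.near_line_pow hiso hgeo hline hC
  have hφ₁ (t : ℝ) : dist (a • α t) (α (φ 1 t)) ≤ 2 * δ := by simpa using hφ 1 t
  rcases (hline.isRoughIsometry_of_near (hiso a) hφ₁).translation_or_reflection with htrans | hrefl
  · refine ⟨|φ 1 0| + 5 * (2 * (2 * δ)) + 2 * δ, fun t => ?_⟩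
    obtain ⟨l, r⟩ := abs_le.mp (htrans t)
    calc dist (α t) (a • α t) ≤ dist (α t) (α (φ 1 t)) + dist (α (φ 1 t)) (a • α t) :=
          dist_triangle _ _ _
      _ ≤ |φ 1 0| + 5 * (2 * (2 * δ)) + 2 * δ := by
          rw [hline, dist_comm]
          gcongr
          · exact abs_le.mpr ⟨by linarith [le_abs_self (φ 1 0)], by linarith [neg_abs_le (φ 1 0)]⟩
          · exact hφ₁ t
  · obtain ⟨B, hB⟩ := hiso.bounded_orbit_of_reflection hline hφ₁ hrefl (fun n => hφ n 0)
    exact absurd (hτ.eq_zero_of_bounded _ hB) hτ₀.ne'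

lemma IsometricAction.exists_pow_commute_of_bounded (hiso : IsometricAction G X) {a b : G}
    {x : X} {R : ℝ} (hproper : {g : G | dist x (g • x) ≤ R}.Finite)
    (hR : ∀ n : ℕ, dist (b ^ n • x) (a • b ^ n • x) ≤ R) :
    ∃ k, 0 < k ∧ a * b ^ k = b ^ k * a := by
  have hconj (n : ℕ) : (b ^ n)⁻¹ * a * b ^ n ∈ {g : G | dist x (g • x) ≤ R} := by
    rw [mem_ofPred_eq, mul_smul, mul_smul, ← hiso.dist_smul_smul (b ^ n), smul_inv_smul]
    exact hR n
  obtain ⟨m, n, hmn, heq⟩ := hproper.exists_lt_map_eq_of_forall_mem hconj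
  obtain ⟨k, rfl⟩ := Nat.exists_eq_add_of_lt hmn
  refine ⟨k + 1, k.succ_pos, ?_⟩
  rw [add_assoc] at heq
  calc a * b ^ (k + 1)
      = b ^ (k + 1) * (b ^ m * ((b ^ (m + (k + 1)))⁻¹ * a * b ^ (m + (k + 1))) * (b ^ m)⁻¹) := by
        group
    _ = b ^ (k + 1) * (b ^ m * ((b ^ m)⁻¹ * a * b ^ m) * (b ^ m)⁻¹) := by rw [heq]
    _ = b ^ (k + 1) * a := by group

lemma DeltaHyperbolic.exists_pow_commute_of_common_quasiAxis (hiso : IsometricAction G X)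
    (hgeo : GeodesicSpace X) {δ : ℝ} (hδ : DeltaHyperbolic X δ)
    (hproper : ∀ (x : X) (R : ℝ), {g : G | dist x (g • x) ≤ R}.Finite) {a b : G} {τ : ℝ}
    (hτ : HasTransLength X a τ) (hτ₀ : 0 < τ) {α : ℝ → X} (hαa : IsQuasiAxis a α)
    (hαb : IsQuasiAxis b α) : ∃ k, 0 < k ∧ a * b ^ k = b ^ k * a := by
  obtain ⟨M, hM⟩ := hδ.exists_dist_smul_le_of_isQuasiAxis hiso hgeo hτ hτ₀ hαa
  obtain ⟨hline, C, -, hC⟩ := hαb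
  refine hiso.exists_pow_commute_of_bounded (x := α 0) (R := 2 * δ + M + 2 * δ) (hproper _ _)
    fun n => ?_
  obtain ⟨s, hs⟩ := hδ.near_line_pow hiso hgeo hline hC n 0
  calc dist (b ^ n • α 0) (a • b ^ n • α 0)
      ≤ dist (b ^ n • α 0) (α s) + dist (α s) (a • α s) + dist (a • α s) (a • b ^ n • α 0) :=
        dist_triangle4 _ _ _ _
    _ ≤ 2 * δ + M + 2 * δ := by
        gcongr
        · exact hM s
        · rw [hiso.dist_smul_smul, dist_comm]; exact hs

end Dynamics

/-- If `G` acts properly by isometries on a `δ`-hyperbolic graph and two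
hyperbolic elements `a`, `b` share a common geodesic quasi-axis `α`, then some positive
powers commute: `[a, bᵏ] = 1` and `[b, aˡ] = 1`. -/
theorem common_axis_implies_commuting_powers
    {G : Type*} [Group G] {X : Type*} [MetricSpace X] [MulAction G X] {δ : ℝ}
    (hiso : IsometricAction G X) (hgeo : GeodesicSpace X) (hδ : DeltaHyperbolic X δ)
    (hproper : ∀ (x : X) (R : ℝ), {g : G | dist x (g • x) ≤ R}.Finite)
    (a b : G) (τa τb : ℝ)
    (hτa : HasTransLength X a τa) (ha : 0 < τa)
    (hτb : HasTransLength X b τb) (hb : 0 < τb)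
    (α : ℝ → X) (hαa : IsQuasiAxis a α) (hαb : IsQuasiAxis b α) :
    ∃ k l : ℕ, 0 < k ∧ 0 < l ∧ a * b ^ k = b ^ k * a ∧ b * a ^ l = a ^ l * b := by
  obtain ⟨k, hk, hak⟩ :=
    hδ.exists_pow_commute_of_common_quasiAxis hiso hgeo hproper hτa ha hαa hαb
  obtain ⟨l, hl, hbl⟩ :=
    hδ.exists_pow_commute_of_common_quasiAxis hiso hgeo hproper hτb hb hαb hαa
  exact ⟨k, l, hk, hl, hak, hbl⟩
end
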